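/- Let $\alpha \in (0,1)$ and let $f \in C^{0,\alpha}(\bar G_r)$ with $f(y',0) = 0$. Define $F(y',t) = \int_0^t s^{-1} f(y',s)\, ds$. Then for every $\epsilon \in (0,\alpha)$, $F \in C^{0,\epsilon}(\bar G_r)$; that is, there is a slight loss of Hölder regularity in the borderline case $a = -1$. -/

import Mathlib

/-!
Since `f` vanishes on `t = 0`, `|f(y', s)| ≤ C s^α`, so `s⁻¹ f(y', s)` is integrable and the
increment of `F` in `t` is `O(|u - t|^α)`. For the increment in `y'`, with `d = |y' - z'|`, the
integrand `s⁻¹ (f(y', s) - f(z', s))` is bounded by `2 C s^(α-1)` for `s < d` and by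
`C d^α s⁻¹` for `s > d`; the second range contributes `C d^α log(t / d)`, and
`log x ≤ x^(α-ε) / (α-ε)` trades the logarithm for the loss of exponent `α - ε`.
-/

open Set Metric MeasureTheory intervalIntegral
open scoped NNReal

def Gset (m : ℕ) (r : ℝ) : Set (EuclideanSpace ℝ (Fin m) × ℝ) :=
  (Metric.ball (0 : EuclideanSpace ℝ (Fin m)) r) ×ˢ (Set.Ioo (0 : ℝ) r)

theorem HolderOnWith.of_dist_le {X Y : Type*} [PseudoMetricSpace X] [PseudoMetricSpace Y]
    {C r : ℝ≥0} {f : X → Y} {s : Set X}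
    (h : ∀ x ∈ s, ∀ y ∈ s, dist (f x) (f y) ≤ C * dist x y ^ (r : ℝ)) :
    HolderOnWith C r f s := fun x hx y hy => by
  rw [edist_dist, edist_dist, ENNReal.ofReal_rpow_of_nonneg dist_nonneg r.coe_nonneg,
    ← ENNReal.ofReal_coe_nnreal, ← ENNReal.ofReal_mul C.coe_nonneg]
  exact ENNReal.ofReal_le_ofReal (h x hx y hy)

namespace Real

theorem rpow_le_rpow_sub_mul_rpow {x y M α ε : ℝ} (hx : 0 ≤ x) (hxM : x ≤ M) (hxy : x ≤ y)
    (hε : 0 < ε) (hεα : ε ≤ α) : x ^ α ≤ M ^ (α - ε) * y ^ ε :=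
  calc x ^ α = x ^ (α - ε) * x ^ ε := by rw [← rpow_add' hx (by linarith), sub_add_cancel]
    _ ≤ M ^ (α - ε) * y ^ ε :=
      mul_le_mul (rpow_le_rpow hx hxM (by linarith)) (rpow_le_rpow hx hxy hε.le)
        (rpow_nonneg hx _) (rpow_nonneg (hx.trans hxM) _)

theorem rpow_mul_log_div_le {d t α ε : ℝ} (hd : 0 < d) (hdt : d ≤ t) (hεα : ε < α) :
    d ^ α * log (t / d) ≤ t ^ (α - ε) / (α - ε) * d ^ ε := by
  have hlog := log_le_rpow_div (div_pos (hd.trans_le hdt) hd).le (sub_pos.2 hεα)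
  calc d ^ α * log (t / d) ≤ d ^ α * ((t / d) ^ (α - ε) / (α - ε)) :=
        mul_le_mul_of_nonneg_left hlog (rpow_nonneg hd.le _)
    _ = t ^ (α - ε) / (α - ε) * d ^ ε := by
        rw [div_rpow (hd.trans_le hdt).le hd.le, ← sub_add_cancel α ε, rpow_add hd,
          add_sub_cancel_right]
        field_simp [(rpow_pos_of_pos hd (α - ε)).ne']

end Real

section InvMulIntegral

variable {g : ℝ → ℝ} {a b α : ℝ}

theorem norm_inv_mul_le_mul_rpow_sub_one {s x A : ℝ} (hs : 0 < s) (hx : |x| ≤ A * s ^ α) :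
    ‖s⁻¹ * x‖ ≤ A * s ^ (α - 1) := by
  rw [Real.norm_eq_abs, abs_mul, abs_inv, abs_of_pos hs, Real.rpow_sub_one hs.ne', mul_div_assoc',
    inv_mul_eq_div]
  exact div_le_div_of_nonneg_right hx hs.le

theorem intervalIntegrable_inv_mul_of_abs_le_rpow {A : ℝ} (ha : 0 ≤ a) (hab : a ≤ b)
    (hα : 0 < α) (hgc : ContinuousOn g (Ioc a b)) (hg : ∀ s ∈ Ioc a b, |g s| ≤ A * s ^ α) :
    IntervalIntegrable (fun s => s⁻¹ * g s) volume a b := by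
  refine ((intervalIntegrable_rpow' (r := α - 1) (by linarith)).const_mul A).mono_fun' ?_ ?_
  · rw [uIoc_of_le hab]
    exact ((continuousOn_inv₀.mono fun s hs => (ha.trans_lt hs.1).ne').mul hgc).aestronglyMeasurable
      measurableSet_Ioc
  · rw [uIoc_of_le hab]
    filter_upwards [ae_restrict_mem measurableSet_Ioc] with s hs
    exact norm_inv_mul_le_mul_rpow_sub_one (ha.trans_lt hs.1) (hg s hs)

theorem abs_integral_inv_mul_le_of_abs_le_rpow {A : ℝ} (ha : 0 ≤ a) (hab : a ≤ b)
    (hα : 0 < α) (hg : ∀ s ∈ Ioc a b, |g s| ≤ A * s ^ α) :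
    |∫ s in a..b, s⁻¹ * g s| ≤ A / α * (b ^ α - a ^ α) :=
  calc |∫ s in a..b, s⁻¹ * g s| ≤ ∫ s in a..b, A * s ^ (α - 1) :=
        norm_integral_le_of_norm_le hab
          (ae_of_all _ fun s hs => norm_inv_mul_le_mul_rpow_sub_one (ha.trans_lt hs.1) (hg s hs))
          ((intervalIntegrable_rpow' (by linarith)).const_mul A)
    _ = A / α * (b ^ α - a ^ α) := by
        rw [intervalIntegral.integral_const_mul, integral_rpow (Or.inl (by linarith)),
          sub_add_cancel]
        ring

theorem abs_integral_inv_mul_le_of_abs_le {B : ℝ} (ha : 0 < a) (hab : a ≤ b)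
    (hg : ∀ s ∈ Ioc a b, |g s| ≤ B) : |∫ s in a..b, s⁻¹ * g s| ≤ B * Real.log (b / a) :=
  calc |∫ s in a..b, s⁻¹ * g s| ≤ ∫ s in a..b, B * s⁻¹ := by
        rw [← Real.norm_eq_abs]
        refine norm_integral_le_of_norm_le hab (ae_of_all _ fun s hs => ?_)
          ((intervalIntegrable_inv (f := fun s => s) (fun s hs => ?_) continuousOn_id).const_mul B)
        · have hs0 : 0 < s := ha.trans hs.1
          rw [Real.norm_eq_abs, abs_mul, abs_inv, abs_of_pos hs0, mul_comm B]
          exact mul_le_mul_of_nonneg_left (hg s hs) (inv_nonneg.2 hs0.le)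
        · rw [uIcc_of_le hab] at hs
          exact (ha.trans_le hs.1).ne'
    _ = B * Real.log (b / a) := by
        rw [intervalIntegral.integral_const_mul, integral_inv_of_pos ha (ha.trans_le hab)]

theorem abs_integral_inv_mul_le_of_abs_le_rpow_min {t r d A ε : ℝ} (ht : 0 ≤ t) (htr : t ≤ r)
    (hd : 0 ≤ d) (hA : 0 ≤ A) (hε : 0 < ε) (hεα : ε < α)
    (hint : IntervalIntegrable (fun s => s⁻¹ * g s) volume 0 t)
    (hg : ∀ s ∈ Ioc 0 t, |g s| ≤ A * s ^ α ∧ |g s| ≤ A * d ^ α) :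
    |∫ s in 0..t, s⁻¹ * g s| ≤ A * r ^ (α - ε) * (1 / α + 1 / (α - ε)) * d ^ ε := by
  have hα : 0 < α := hε.trans hεα
  have hαε : 0 < α - ε := sub_pos.2 hεα
  have hr : 0 ≤ r := ht.trans htr
  have hsplit : A * r ^ (α - ε) * (1 / α + 1 / (α - ε)) * d ^ ε
      = A / α * (r ^ (α - ε) * d ^ ε) + A * (r ^ (α - ε) / (α - ε)) * d ^ ε := by
    field_simp
  have hlarge : 0 ≤ A * (r ^ (α - ε) / (α - ε)) * d ^ ε := by positivity
  have hsmall : ∀ x, 0 ≤ x → x ≤ t → x ≤ d →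
      |∫ s in 0..x, s⁻¹ * g s| ≤ A / α * (r ^ (α - ε) * d ^ ε) := fun x hx hxt hxd =>
    calc |∫ s in 0..x, s⁻¹ * g s| ≤ A / α * (x ^ α - 0 ^ α) :=
          abs_integral_inv_mul_le_of_abs_le_rpow le_rfl hx hα
            fun s hs => (hg s ⟨hs.1, hs.2.trans hxt⟩).1
      _ = A / α * x ^ α := by rw [Real.zero_rpow hα.ne', sub_zero]
      _ ≤ A / α * (r ^ (α - ε) * d ^ ε) := mul_le_mul_of_nonneg_left
          (Real.rpow_le_rpow_sub_mul_rpow hx (hxt.trans htr) hxd hε hεα.le) (by positivity)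
  rw [hsplit]
  rcases le_or_gt t d with htd | hdt
  · linarith [hsmall t ht le_rfl htd]
  rcases hd.eq_or_lt with rfl | hd0
  · have hvanish := abs_integral_inv_mul_le_of_abs_le_rpow (g := g) (A := 0) le_rfl ht hα
      fun s hs => by simpa [Real.zero_rpow hα.ne'] using (hg s hs).2
    rw [zero_div, zero_mul] at hvanish
    exact hvanish.trans (by positivity)
  have hdmem : d ∈ uIcc 0 t := mem_uIcc_of_le hd hdt.le
  rw [← integral_add_adjacent_intervals
    (hint.mono_set (uIcc_subset_uIcc left_mem_uIcc hdmem))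
    (hint.mono_set (uIcc_subset_uIcc hdmem right_mem_uIcc))]
  calc |(∫ s in 0..d, s⁻¹ * g s) + ∫ s in d..t, s⁻¹ * g s|
      ≤ |∫ s in 0..d, s⁻¹ * g s| + |∫ s in d..t, s⁻¹ * g s| := abs_add_le _ _
    _ ≤ A / α * (r ^ (α - ε) * d ^ ε) + A * d ^ α * Real.log (t / d) :=
        add_le_add (hsmall d hd hdt.le le_rfl) (abs_integral_inv_mul_le_of_abs_le hd0 hdt.le
          fun s hs => (hg s ⟨hd0.trans hs.1, hs.2⟩).2)
    _ ≤ A / α * (r ^ (α - ε) * d ^ ε) + A * (r ^ (α - ε) / (α - ε)) * d ^ ε := by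
        refine add_le_add le_rfl ?_
        calc A * d ^ α * Real.log (t / d) = A * (d ^ α * Real.log (t / d)) := mul_assoc _ _ _
          _ ≤ A * (t ^ (α - ε) / (α - ε) * d ^ ε) :=
              mul_le_mul_of_nonneg_left (Real.rpow_mul_log_div_le hd0 hdt.le hεα) hA
          _ ≤ A * (r ^ (α - ε) / (α - ε)) * d ^ ε := by
              rw [← mul_assoc]
              gcongr

end InvMulIntegral

namespace HolderOnWith

variable {X : Type*} [PseudoMetricSpace X] {S : Set X} {f : X × ℝ → ℝ} {C α : ℝ≥0} {r : ℝ}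
  {x y : X} {s : ℝ}

theorem abs_apply_le_rpow (hf : HolderOnWith C α f (S ×ˢ Icc 0 r))
    (hzero : ∀ x ∈ S, f (x, 0) = 0) (hx : x ∈ S) (hs : s ∈ Icc 0 r) :
    |f (x, s)| ≤ C * s ^ (α : ℝ) := by
  have h := hf.dist_le_of_le (x := (x, s)) (y := (x, 0)) (d := s) ⟨hx, hs⟩
    ⟨hx, left_mem_Icc.2 (hs.1.trans hs.2)⟩ (by simp [Prod.dist_eq, abs_of_nonneg hs.1, hs.1])
  rwa [Real.dist_eq, hzero x hx, sub_zero] at h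

theorem abs_sub_apply_le_rpow (hf : HolderOnWith C α f (S ×ˢ Icc 0 r)) (hx : x ∈ S) (hy : y ∈ S)
    (hs : s ∈ Icc 0 r) : |f (x, s) - f (y, s)| ≤ C * dist x y ^ (α : ℝ) :=
  hf.dist_le_of_le ⟨hx, hs⟩ ⟨hy, hs⟩ (by simp [Prod.dist_eq])

theorem intervalIntegrable_inv_mul (hf : HolderOnWith C α f (S ×ˢ Icc 0 r))
    (hzero : ∀ x ∈ S, f (x, 0) = 0) (hα : 0 < α) (hx : x ∈ S) {a b : ℝ} (ha : a ∈ Icc 0 r)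
    (hb : b ∈ Icc 0 r) : IntervalIntegrable (fun s => s⁻¹ * f (x, s)) volume a b := by
  have hr : 0 ≤ r := ha.1.trans ha.2
  have hcont : ContinuousOn (fun s => f (x, s)) (Ioc 0 r) :=
    (hf.continuousOn hα).comp (by fun_prop) fun s hs => ⟨hx, Ioc_subset_Icc_self hs⟩
  refine (intervalIntegrable_inv_mul_of_abs_le_rpow le_rfl hr hα hcont
    fun s hs => hf.abs_apply_le_rpow hzero hx (Ioc_subset_Icc_self hs)).mono_set ?_
  rw [uIcc_of_le hr]
  exact uIcc_subset_Icc ha hb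

theorem abs_intervalIntegral_inv_mul_sub_le (hf : HolderOnWith C α f (S ×ˢ Icc 0 r))
    (hzero : ∀ x ∈ S, f (x, 0) = 0) {ε t : ℝ} (hε : 0 < ε) (hεα : ε < α) (hx : x ∈ S)
    (hy : y ∈ S) (ht : 0 ≤ t) (htr : t ≤ r) :
    |∫ s in 0..t, s⁻¹ * (f (x, s) - f (y, s))|
      ≤ 2 * C * r ^ ((α : ℝ) - ε) * (1 / α + 1 / (α - ε)) * dist x y ^ ε := by
  have hα : 0 < α := NNReal.coe_pos.1 (hε.trans hεα)
  have h0I : (0 : ℝ) ∈ Icc 0 r := left_mem_Icc.2 (ht.trans htr)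
  refine abs_integral_inv_mul_le_of_abs_le_rpow_min ht htr dist_nonneg (by positivity) hε hεα
    ?_ fun s hs => ?_
  · simpa only [mul_sub] using (hf.intervalIntegrable_inv_mul hzero hα hx h0I ⟨ht, htr⟩).sub
      (hf.intervalIntegrable_inv_mul hzero hα hy h0I ⟨ht, htr⟩)
  have hsI : s ∈ Icc 0 r := ⟨hs.1.le, hs.2.trans htr⟩
  constructor
  · linarith [abs_sub (f (x, s)) (f (y, s)), hf.abs_apply_le_rpow hzero hx hsI,
      hf.abs_apply_le_rpow hzero hy hsI]
  · linarith [hf.abs_sub_apply_le_rpow hx hy hsI,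
      mul_nonneg C.coe_nonneg (Real.rpow_nonneg (dist_nonneg (x := x) (y := y)) α)]

theorem abs_intervalIntegral_inv_mul_le_rpow_sub (hf : HolderOnWith C α f (S ×ˢ Icc 0 r))
    (hzero : ∀ x ∈ S, f (x, 0) = 0) (hα : 0 < α) (hα1 : α ≤ 1) {t u : ℝ} (hy : y ∈ S)
    (ht : 0 ≤ t) (htu : t ≤ u) (hu : u ≤ r) :
    |∫ s in t..u, s⁻¹ * f (y, s)| ≤ C / α * (u - t) ^ (α : ℝ) := by
  have hpow : u ^ (α : ℝ) - t ^ (α : ℝ) ≤ (u - t) ^ (α : ℝ) := by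
    have := Real.rpow_add_le_add_rpow (sub_nonneg.2 htu) ht α.coe_nonneg (by exact_mod_cast hα1)
    rw [sub_add_cancel] at this
    linarith
  calc |∫ s in t..u, s⁻¹ * f (y, s)| ≤ C / α * (u ^ (α : ℝ) - t ^ (α : ℝ)) :=
        abs_integral_inv_mul_le_of_abs_le_rpow ht htu hα
          fun s hs => hf.abs_apply_le_rpow hzero hy ⟨ht.trans hs.1.le, hs.2.trans hu⟩
    _ ≤ C / α * (u - t) ^ (α : ℝ) := by gcongr

theorem dist_intervalIntegral_inv_mul_le (hf : HolderOnWith C α f (S ×ˢ Icc 0 r))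
    (hzero : ∀ x ∈ S, f (x, 0) = 0) (hα1 : α ≤ 1) {ε : ℝ} (hε : 0 < ε) (hεα : ε < α) {t u : ℝ}
    (hx : x ∈ S) (hy : y ∈ S) (ht : 0 ≤ t) (htu : t ≤ u) (hu : u ≤ r) :
    dist (∫ s in 0..t, s⁻¹ * f (x, s)) (∫ s in 0..u, s⁻¹ * f (y, s))
      ≤ C * r ^ ((α : ℝ) - ε) * (3 / α + 2 / (α - ε)) * dist (x, t) (y, u) ^ ε := by
  have hα : 0 < α := NNReal.coe_pos.1 (hε.trans hεα)
  have hαε : 0 < (α : ℝ) - ε := sub_pos.2 hεα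
  have hr : 0 ≤ r := ht.trans (htu.trans hu)
  have h0I : (0 : ℝ) ∈ Icc 0 r := left_mem_Icc.2 hr
  have htI : t ∈ Icc 0 r := ⟨ht, htu.trans hu⟩
  have huI : u ∈ Icc 0 r := ⟨ht.trans htu, hu⟩
  have hsplit : (∫ s in 0..t, s⁻¹ * f (x, s)) - ∫ s in 0..u, s⁻¹ * f (y, s)
      = (∫ s in 0..t, s⁻¹ * (f (x, s) - f (y, s))) - ∫ s in t..u, s⁻¹ * f (y, s) := by
    have hyt := hf.intervalIntegrable_inv_mul hzero hα hy h0I htI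
    simp_rw [mul_sub]
    rw [integral_sub (hf.intervalIntegrable_inv_mul hzero hα hx h0I htI) hyt,
      ← integral_add_adjacent_intervals hyt (hf.intervalIntegrable_inv_mul hzero hα hy htI huI)]
    ring
  have htail : |∫ s in t..u, s⁻¹ * f (y, s)| ≤ C / α * (r ^ ((α : ℝ) - ε) * (u - t) ^ ε) :=
    (hf.abs_intervalIntegral_inv_mul_le_rpow_sub hzero hα hα1 hy ht htu hu).trans <|
      mul_le_mul_of_nonneg_left (Real.rpow_le_rpow_sub_mul_rpow (sub_nonneg.2 htu) (by linarith)
        le_rfl hε hεα.le) (by positivity)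
  have hxy : dist x y ≤ dist (x, t) (y, u) := by
    rw [Prod.dist_eq]
    exact le_max_left _ _
  have hut : u - t ≤ dist (x, t) (y, u) := by
    rw [Prod.dist_eq, Real.dist_eq, abs_sub_comm]
    exact (le_abs_self _).trans (le_max_right _ _)
  rw [Real.dist_eq, hsplit]
  calc _ ≤ |∫ s in 0..t, s⁻¹ * (f (x, s) - f (y, s))| + |∫ s in t..u, s⁻¹ * f (y, s)| :=
        abs_sub _ _
    _ ≤ 2 * C * r ^ ((α : ℝ) - ε) * (1 / α + 1 / (α - ε)) * dist x y ^ ε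
        + C / α * (r ^ ((α : ℝ) - ε) * (u - t) ^ ε) :=
        add_le_add (hf.abs_intervalIntegral_inv_mul_sub_le hzero hε hεα hx hy ht htI.2) htail
    _ ≤ 2 * C * r ^ ((α : ℝ) - ε) * (1 / α + 1 / (α - ε)) * dist (x, t) (y, u) ^ ε
        + C / α * (r ^ ((α : ℝ) - ε) * dist (x, t) (y, u) ^ ε) := by
        have : 0 ≤ 1 / (α - ε) := by positivity
        gcongr
    _ = C * r ^ ((α : ℝ) - ε) * (3 / α + 2 / (α - ε)) * dist (x, t) (y, u) ^ ε := by ring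

theorem intervalIntegral_inv_mul (hf : HolderOnWith C α f (S ×ˢ Icc 0 r))
    (hzero : ∀ x ∈ S, f (x, 0) = 0) (hα1 : α ≤ 1) {ε : ℝ≥0} (hε : 0 < ε) (hεα : ε < α) :
    HolderOnWith (Real.toNNReal (C * r ^ ((α : ℝ) - ε) * (3 / α + 2 / (α - ε)))) ε
      (fun p : X × ℝ => ∫ s in 0..p.2, s⁻¹ * f (p.1, s)) (S ×ˢ Icc 0 r) := by
  refine of_dist_le ?_
  rintro ⟨x, t⟩ ⟨hx, ht⟩ ⟨y, u⟩ ⟨hy, hu⟩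
  have hαε : 0 < (α : ℝ) - ε := sub_pos.2 (NNReal.coe_lt_coe.2 hεα)
  have hr : 0 ≤ r := ht.1.trans ht.2
  rw [Real.coe_toNNReal _ (by positivity)]
  rcases le_total t u with htu | hut
  · exact hf.dist_intervalIntegral_inv_mul_le hzero hα1 hε hεα hx hy ht.1 htu hu.2
  · rw [dist_comm, dist_comm (x, t)]
    exact hf.dist_intervalIntegral_inv_mul_le hzero hα1 hε hεα hy hx hu.1 hut ht.2

end HolderOnWith

/-- Lemma A.2 (borderline case `a = -1`): if `f` is `α`-Hölder on `closure G_r` and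
vanishes at `t = 0`, then `F(y',t) = ∫_0^t s^{-1} f(y',s) ds` is `ε`-Hölder on
`closure G_r` for every `ε ∈ (0,α)`. -/
theorem stmt_2 {m : ℕ} {r α : ℝ} (hr : 0 < r)
    (hα : α ∈ Set.Ioo (0 : ℝ) 1)
    {f : EuclideanSpace ℝ (Fin m) × ℝ → ℝ} {Cf : NNReal}
    (hf : HolderOnWith Cf ⟨α, le_of_lt hα.1⟩ f (closure (Gset m r)))
    (hzero : ∀ y' ∈ closure (Metric.ball (0 : EuclideanSpace ℝ (Fin m)) r), f (y', 0) = 0) :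
    ∀ ε : ℝ, ∀ hε : ε ∈ Set.Ioo (0 : ℝ) α, ∃ C : NNReal,
      HolderOnWith C ⟨ε, le_of_lt hε.1⟩
        (fun p : EuclideanSpace ℝ (Fin m) × ℝ =>
          ∫ s in (0 : ℝ)..p.2, s⁻¹ * f (p.1, s))
        (closure (Gset m r)) := by
  intro ε hε
  have hcl : closure (Gset m r) = closure (ball (0 : EuclideanSpace ℝ (Fin m)) r) ×ˢ Icc 0 r := by
    rw [Gset, closure_prod_eq, closure_Ioo hr.ne]
  rw [hcl] at hf ⊢
  exact ⟨_, hf.intervalIntegral_inv_mul hzero (NNReal.coe_le_one.1 hα.2.le) hε.1 hε.2⟩
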